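/- Memoryless transmission fails in the erasure example: Let W be the binary erasure channel BEC(p) on inputs {0,1} and outputs {0,1,e}: W(x|x) = 1−p, W(e|x) = p. Let W̄(·|·,0) and W̄(·|·,1) be the channels: W̄(0|0,0) = (1−p)(1−r), W̄(1|0,0) = (1−p)r, W̄(e|0,0) = p, W̄(1|1,0) = 1−p, W̄(e|1,0) = p; and symmetrically W̄(1|1,1) = (1−p)(1−r), W̄(0|1,1) = (1−p)r, W̄(e|1,1) = p, W̄(0|0,1) = 1−p, W̄(e|0,1) = p. Then for every input distribution P_X on {0,1}, choosing the state distribution P_{S̄} with P_{S̄}(0) = 1 − P_X(0) makes the single-letter output distribution under H1, Q̄(y) := Σ_{x,s̄} P_X(x) P_{S̄}(s̄) W̄(y|x,s̄), equal to the output distribution under H0, Q(y) := Σ_x P_X(x) W(y|x). Consequently the Chernoff–Stein exponent of any memoryless (i.i.d.-input) private-randomness scheme is zero. -/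

import Mathlib

open Finset

/-- `p` is a probability mass function. -/
def IsDist {Z : Type*} [Fintype Z] (p : Z → ℝ) : Prop :=
  (∀ z, 0 ≤ p z) ∧ ∑ z, p z = 1

/-- The output alphabet `{0, 1, e}` of the erasure example. -/
inductive Out : Type
  | o0 | o1 | oe
deriving DecidableEq

instance : Fintype Out where
  elems := {Out.o0, Out.o1, Out.oe}
  complete := by intro x; cases x <;> simp

/-- The binary erasure channel `BEC(p)`: `W(x|x) = 1-p`, `W(e|x) = p`
(inputs `false = 0`, `true = 1`). -/
noncomputable def Wbec (p : ℝ) : Bool → Out → ℝ :=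
  fun x y =>
    match x, y with
    | false, Out.o0 => 1 - p
    | false, Out.o1 => 0
    | false, Out.oe => p
    | true,  Out.o0 => 0
    | true,  Out.o1 => 1 - p
    | true,  Out.oe => p

/-- The state-dependent channel `W̄(·|·,s̄)` of the erasure example (states
`false = 0`, `true = 1`): `W̄(·|·,0)` transmits input `1` cleanly (up to erasure) and
flips input `0` to `1` with probability `(1-p)r`; `W̄(·|·,1)` is symmetric. -/
noncomputable def WbarEx (p r : ℝ) : Bool → Bool → Out → ℝ :=
  fun x s y =>
    match x, s, y with
    | false, false, Out.o0 => (1 - p) * (1 - r)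
    | false, false, Out.o1 => (1 - p) * r
    | false, false, Out.oe => p
    | true,  false, Out.o0 => 0
    | true,  false, Out.o1 => 1 - p
    | true,  false, Out.oe => p
    | false, true,  Out.o0 => 1 - p
    | false, true,  Out.o1 => 0
    | false, true,  Out.oe => p
    | true,  true,  Out.o0 => (1 - p) * r
    | true,  true,  Out.o1 => (1 - p) * (1 - r)
    | true,  true,  Out.oe => p

/-- The i.i.d. output distribution on `Y^n` under `H0` for a memoryless scheme with
single-letter input distribution `pX`. -/
noncomputable def QN (p : ℝ) (pX : Bool → ℝ) {n : ℕ} (y : Fin n → Out) : ℝ :=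
  ∏ i : Fin n, ∑ x, pX x * Wbec p x (y i)

/-- The output distribution on `Y^n` under `H1` for a memoryless scheme with
single-letter input distribution `pX` when the adversary picks its state word according
to `ν` (independently of the inputs). -/
noncomputable def QbarN (p r : ℝ) (pX : Bool → ℝ) {n : ℕ}
    (ν : (Fin n → Bool) → ℝ) (y : Fin n → Out) : ℝ :=
  ∑ sv : Fin n → Bool, ν sv * ∏ i : Fin n, ∑ x, pX x * WbarEx p r x (sv i) (y i)

/-- Type-1 error of the detector `dec` for the memoryless scheme (`true` = decide `H1`;
under `H0` there is no adversary choice). -/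
noncomputable def alphaIID (p : ℝ) (pX : Bool → ℝ) {n : ℕ}
    (dec : (Fin n → Out) → Bool) : ℝ :=
  ∑ y : Fin n → Out, QN p pX y * (if dec y = true then 1 else 0)

/-- Worst-case type-2 error of the detector `dec` for the memoryless scheme. -/
noncomputable def betaIID (p r : ℝ) (pX : Bool → ℝ) {n : ℕ}
    (dec : (Fin n → Out) → Bool) : ℝ :=
  ⨆ ν : {ν : (Fin n → Bool) → ℝ // IsDist ν},
    ∑ y : Fin n → Out, QbarN p r pX ν.1 y * (if dec y = false then 1 else 0)

/-- `β_n^ε` for the memoryless scheme with input distribution `pX`. -/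
noncomputable def betaOptIID (p r : ℝ) (pX : Bool → ℝ) (n : ℕ) (ε : ℝ) : ℝ :=
  sInf {b | ∃ dec : (Fin n → Out) → Bool, alphaIID p pX dec ≤ ε ∧ b = betaIID p r pX dec}

/-!
Choose the adversary's state i.i.d. with `P_S̄(0) = P_X(1)` and `P_S̄(1) = P_X(0)`. State `0`
flips input `0` to output `1` with probability `(1-p) r`, state `1` flips input `1` to output `0`
with the same probability, and with these weights both flows carry the mass
`(1-p) r P_X(0) P_X(1)`, so they cancel and the single-letter output laws agree. The induced
product law on state words then reproduces the `H0` output law on `Y^n` exactly, so every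
detector has type-2 error at least `1 - α ≥ 1 - ε` against this adversary. Hence
`1 - ε ≤ β_n^ε ≤ 1` for all `n`, and `-(1/n) log β_n^ε → 0`.
-/

section Products

variable {ι α : Type*} [Fintype ι] [DecidableEq ι] [Fintype α]

theorem sum_prod_eq_one {f : ι → α → ℝ} (hf : ∀ i, ∑ a, f i a = 1) :
    ∑ v : ι → α, ∏ i, f i (v i) = 1 := by
  rw [← Fintype.prod_sum]
  simp only [hf, prod_const_one]

theorem IsDist.pi {q : α → ℝ} (hq : IsDist q) : IsDist fun v : ι → α => ∏ i, q (v i) :=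
  ⟨fun _ => prod_nonneg fun _ _ => hq.1 _, sum_prod_eq_one fun _ => hq.2⟩

theorem sum_prod_mul_prod (q : α → ℝ) (g : ι → α → ℝ) :
    ∑ v : ι → α, (∏ i, q (v i)) * ∏ i, g i (v i) = ∏ i, ∑ a, q a * g i a := by
  simp_rw [← prod_mul_distrib]
  exact (Fintype.prod_sum fun i a => q a * g i a).symm

end Products

theorem sum_sum_mul_eq_one {α β : Type*} [Fintype α] [Fintype β] {P : α → ℝ}
    {K : α → β → ℝ} (hP : ∑ x, P x = 1) (hK : ∀ x, ∑ y, K x y = 1) :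
    ∑ y, ∑ x, P x * K x y = 1 := by
  rw [sum_comm]
  simp only [← mul_sum, hK, mul_one, hP]

theorem bddAbove_range_isDist_sum_mul {ι : Type*} [Fintype ι] (c : ι → ℝ) :
    BddAbove (Set.range fun ν : {ν : ι → ℝ // IsDist ν} => ∑ i, ν.1 i * c i) := by
  refine ⟨∑ j, |c j|, ?_⟩
  rintro _ ⟨⟨ν, hν⟩, rfl⟩
  have hc : ∀ i, c i ≤ ∑ j, |c j| := fun i =>
    (le_abs_self _).trans (single_le_sum (fun j _ => abs_nonneg (c j)) (mem_univ i))
  calc ∑ i, ν i * c i ≤ ∑ i, ν i * ∑ j, |c j| :=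
        sum_le_sum fun i _ => mul_le_mul_of_nonneg_left (hc i) (hν.1 i)
    _ = ∑ j, |c j| := by rw [← sum_mul, hν.2, one_mul]

theorem Real.tendsto_neg_one_div_mul_log_of_mem_Icc {b : ℕ → ℝ} {c C : ℝ} (hc : 0 < c)
    (hb : ∀ n, b n ∈ Set.Icc c C) :
    Filter.Tendsto (fun n : ℕ => -(1 / (n : ℝ)) * Real.log (b n)) Filter.atTop (nhds 0) := by
  have hlim : ∀ k : ℝ, Filter.Tendsto (fun n : ℕ => 1 / (n : ℝ) * k) Filter.atTop (nhds 0) :=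
    fun k => by simpa using tendsto_one_div_atTop_nhds_zero_nat.mul_const k
  have hrw : ∀ n : ℕ, -(1 / (n : ℝ)) * Real.log (b n) = 1 / (n : ℝ) * -Real.log (b n) :=
    fun n => by ring
  refine tendsto_of_tendsto_of_tendsto_of_le_of_le (hlim (-Real.log C)) (hlim (-Real.log c))
    (fun n => ?_) (fun n => ?_) <;> rw [hrw] <;>
    refine mul_le_mul_of_nonneg_left (neg_le_neg ?_) (by positivity)
  · exact Real.log_le_log (hc.trans_le (hb n).1) (hb n).2
  · exact Real.log_le_log hc (hb n).1

theorem sum_Out (f : Out → ℝ) : ∑ y, f y = f .o0 + f .o1 + f .oe := by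
  rw [show (univ : Finset Out) = {.o0, .o1, .oe} from rfl, sum_insert (by decide),
    sum_pair (by decide), add_assoc]

theorem sum_Wbec (p : ℝ) (x : Bool) : ∑ y, Wbec p x y = 1 := by
  rw [sum_Out]
  cases x <;> simp only [Wbec] <;> ring

theorem sum_WbarEx (p r : ℝ) (x s : Bool) : ∑ y, WbarEx p r x s y = 1 := by
  rw [sum_Out]
  cases x <;> cases s <;> simp only [WbarEx] <;> ring

noncomputable def matchingState (pX : Bool → ℝ) : Bool → ℝ :=
  fun s => if s = false then 1 - pX false else pX false

theorem isDist_matchingState {pX : Bool → ℝ} (hpX : IsDist pX) :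
    IsDist (matchingState pX) := by
  have hsum := hpX.2
  rw [Fintype.sum_bool] at hsum
  refine ⟨fun s => ?_, ?_⟩
  · cases s <;> simp only [matchingState, reduceIte, Bool.true_eq_false] <;>
      linarith [hpX.1 false, hpX.1 true]
  · simp only [matchingState, Fintype.sum_bool]
    norm_num

theorem sum_matchingState_mul_WbarEx (p r : ℝ) {pX : Bool → ℝ} (hpX : ∑ x, pX x = 1)
    (y : Out) :
    ∑ x, ∑ s, pX x * matchingState pX s * WbarEx p r x s y = ∑ x, pX x * Wbec p x y := by
  rw [Fintype.sum_bool] at hpX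
  have htrue : pX true = 1 - pX false := by linarith
  cases y <;> simp [matchingState, WbarEx, Wbec, htrue] <;> ring

section Memoryless

variable (p r : ℝ) {pX : Bool → ℝ} {n : ℕ}

theorem sum_QN (hpX : ∑ x, pX x = 1) : ∑ y : Fin n → Out, QN p pX y = 1 :=
  sum_prod_eq_one fun _ => sum_sum_mul_eq_one hpX (sum_Wbec p)

theorem sum_QbarN (hpX : ∑ x, pX x = 1) {ν : (Fin n → Bool) → ℝ} (hν : ∑ sv, ν sv = 1) :
    ∑ y, QbarN p r pX ν y = 1 := by
  have hrow (sv : Fin n → Bool) :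
      ∑ y : Fin n → Out, ∏ i, ∑ x, pX x * WbarEx p r x (sv i) (y i) = 1 :=
    sum_prod_eq_one fun i => sum_sum_mul_eq_one hpX fun x => sum_WbarEx p r x (sv i)
  simp only [QbarN]
  rw [sum_comm]
  simp only [← mul_sum, hrow, mul_one, hν]

theorem QbarN_pi_matchingState (hpX : ∑ x, pX x = 1) (y : Fin n → Out) :
    QbarN p r pX (fun sv => ∏ i, matchingState pX (sv i)) y = QN p pX y := by
  refine (sum_prod_mul_prod (matchingState pX) fun i s => ∑ x, pX x * WbarEx p r x s (y i)).trans
    (prod_congr rfl fun i _ => ?_)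
  rw [← sum_matchingState_mul_WbarEx p r hpX, sum_comm]
  simp only [mul_sum, mul_comm, mul_left_comm]

theorem sum_QbarN_mul (ν : (Fin n → Bool) → ℝ) (g : (Fin n → Out) → ℝ) :
    ∑ y, QbarN p r pX ν y * g y =
      ∑ sv, ν sv * ∑ y, (∏ i, ∑ x, pX x * WbarEx p r x (sv i) (y i)) * g y := by
  simp only [QbarN, sum_mul, mul_sum, mul_assoc]
  exact sum_comm

theorem one_sub_alphaIID_le_betaIID (hpX : IsDist pX) (dec : (Fin n → Out) → Bool) :
    1 - alphaIID p pX dec ≤ betaIID p r pX dec := by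
  let ν : {ν : (Fin n → Bool) → ℝ // IsDist ν} := ⟨_, (isDist_matchingState hpX).pi⟩
  have hbdd := bddAbove_range_isDist_sum_mul fun sv : Fin n → Bool =>
    ∑ y, (∏ i, ∑ x, pX x * WbarEx p r x (sv i) (y i)) * if dec y = false then 1 else 0
  simp only [← sum_QbarN_mul] at hbdd
  calc 1 - alphaIID p pX dec
      = ∑ y, QbarN p r pX ν.1 y * if dec y = false then 1 else 0 := by
        rw [eq_comm, eq_sub_iff_add_eq, alphaIID, ← sum_add_distrib]
        refine (sum_congr rfl fun y _ => ?_).trans (sum_QN p hpX.2)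
        rw [QbarN_pi_matchingState p r hpX.2]
        cases dec y <;> simp
    _ ≤ betaIID p r pX dec := le_ciSup hbdd ν

theorem betaIID_const_false (hpX : IsDist pX) :
    betaIID p r pX (fun _ : Fin n → Out => false) = 1 := by
  have : Nonempty {ν : (Fin n → Bool) → ℝ // IsDist ν} :=
    ⟨⟨_, (isDist_matchingState hpX).pi⟩⟩
  simp only [betaIID, reduceIte, mul_one, fun ν : {ν // IsDist ν} => sum_QbarN p r hpX.2 ν.2.2,
    ciSup_const]

theorem betaOptIID_mem_Icc (hpX : IsDist pX) (n : ℕ) {ε : ℝ} (hε : 0 ≤ ε) :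
    betaOptIID p r pX n ε ∈ Set.Icc (1 - ε) 1 := by
  have hlow : ∀ b ∈ {b | ∃ dec : (Fin n → Out) → Bool,
      alphaIID p pX dec ≤ ε ∧ b = betaIID p r pX dec}, 1 - ε ≤ b := by
    rintro _ ⟨dec, hα, rfl⟩
    linarith [one_sub_alphaIID_le_betaIID p r hpX dec]
  have hone : (1 : ℝ) ∈ {b | ∃ dec : (Fin n → Out) → Bool,
      alphaIID p pX dec ≤ ε ∧ b = betaIID p r pX dec} :=
    ⟨fun _ => false, by simpa [alphaIID] using hε, (betaIID_const_false p r hpX).symm⟩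
  exact ⟨le_csInf ⟨1, hone⟩ hlow, csInf_le ⟨1 - ε, hlow⟩ hone⟩

end Memoryless

theorem memoryless_fails_erasure_example_general
    (p r : ℝ)
    (pX : Bool → ℝ) (hpX : IsDist pX) :
    (∀ y : Out,
      (∑ x, ∑ s, pX x * (if s = false then 1 - pX false else pX false) *
          WbarEx p r x s y) =
        ∑ x, pX x * Wbec p x y) ∧
    (∀ ε : ℝ, ε ∈ Set.Ioo (0:ℝ) 1 →
      Filter.liminf (fun n : ℕ => -(1/(n:ℝ)) * Real.log (betaOptIID p r pX n ε))
        Filter.atTop = 0) := by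
  refine ⟨sum_matchingState_mul_WbarEx p r hpX.2, fun ε ⟨hε0, hε1⟩ => ?_⟩
  exact (Real.tendsto_neg_one_div_mul_log_of_mem_Icc (sub_pos.2 hε1)
    fun n => betaOptIID_mem_Icc p r hpX n hε0.le).liminf_eq

/-- Memoryless transmission fails in the erasure example: for every input distribution
`P_X`, choosing `P_{S̄}(0) = 1 - P_X(0)` matches the single-letter output distributions
under the two hypotheses; consequently the Chernoff–Stein exponent of every memoryless
(i.i.d.-input) private-randomness scheme is zero. -/
theorem memoryless_fails_erasure_example
    (p r : ℝ) (hp : p ∈ Set.Ioo (0:ℝ) 1) (hr : r ∈ Set.Ioo (0:ℝ) 1)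
    (pX : Bool → ℝ) (hpX : IsDist pX) :
    (∀ y : Out,
      (∑ x, ∑ s, pX x * (if s = false then 1 - pX false else pX false) *
          WbarEx p r x s y) =
        ∑ x, pX x * Wbec p x y) ∧
    (∀ ε : ℝ, ε ∈ Set.Ioo (0:ℝ) 1 →
      Filter.liminf (fun n : ℕ => -(1/(n:ℝ)) * Real.log (betaOptIID p r pX n ε))
        Filter.atTop = 0) :=
  memoryless_fails_erasure_example_general p r pX hpX
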